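/- arXiv:1809.05422 — 2 statements merged into one kernel-verified Lean document; each statement's English description precedes it below -/
import Mathlib

section
/- Let U, W, Z, A be random variables on a finite probability space with Z, A binary, satisfying: (a) 0 < P(Z=1|W) < 1 a.s.; (b) U ⫫ Z | W; (c) E[A|U,W,Z=1] − E[A|U,W,Z=0] = δ(W) a.s. for a function δ of W with δ(W) ≠ 0 a.s. Then for each a ∈ {0,1}: E[ (−1)^{1−Z} 1{A=a} / P(Z|W) | U, W ] = (−1)^{1−a} δ(W) almost surely. In particular this conditional expectation does not depend on U. -/
open Finset
open scoped Classical BigOperators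

noncomputable section

variable {Ω : Type}

/-- Expectation of `f` under pmf `p` on a finite sample space. -/
def E [Fintype Ω] (p f : Ω → ℝ) : ℝ := ∑ ω, p ω * f ω

/-- Probability of the event `s` under pmf `p`. -/
def Pr [Fintype Ω] (p : Ω → ℝ) (s : Ω → Prop) : ℝ := ∑ ω, if s ω then p ω else 0

/-- Conditional expectation of `f` given the event `s`. -/
def CE [Fintype Ω] (p f : Ω → ℝ) (s : Ω → Prop) : ℝ :=
  (∑ ω, if s ω then p ω * f ω else 0) / Pr p s

/-- The realized instrument propensity P(Z = Z(ω) | W = W(ω)). -/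
def PZ {β : Type} [Fintype Ω] (p : Ω → ℝ) (W : Ω → β) (Z : Ω → ℝ) (ω : Ω) : ℝ :=
  Pr p (fun ω' => W ω' = W ω ∧ Z ω' = Z ω) / Pr p (fun ω' => W ω' = W ω)

/-- The sign (−1)^{1−X(ω)} for a {0,1}-valued variable X. -/
def sgn (X : Ω → ℝ) (ω : Ω) : ℝ := if X ω = 1 then 1 else -1

/-! Split the conditional mean given `(U, W) = (u, w)` according to the value of `Z`. On the
cell `Z = z` the weight `1 / P(Z = z | W = w)` is a constant, and conditional independence
`U ⫫ Z | W` says exactly that this constant times `P(U = u, W = w, Z = z)` equals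
`P(U = u, W = w)`. Hence the weighted mean is the contrast
`E[1{A = a} | U, W, Z = 1] - E[1{A = a} | U, W, Z = 0]`, which is `±δ(W)` by the independent
compliance type assumption. -/

section FiniteSampleSpace

variable [Fintype Ω]

def partialE (p f : Ω → ℝ) (s : Ω → Prop) : ℝ := ∑ ω, if s ω then p ω * f ω else 0

section PartialExpectation

variable (p : Ω → ℝ) {f g : Ω → ℝ} {s t r : Ω → Prop}

lemma CE_eq_partialE_div : CE p f s = partialE p f s / Pr p s := rfl

lemma partialE_eq_CE_mul (h : Pr p s ≠ 0) : partialE p f s = CE p f s * Pr p s :=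
  (div_mul_cancel₀ _ h).symm

lemma Pr_congr (h : ∀ ω, s ω ↔ t ω) : Pr p s = Pr p t :=
  congrArg (Pr p) (funext fun ω => propext (h ω))

lemma partialE_congr (h : ∀ ω, s ω → f ω = g ω) : partialE p f s = partialE p g s :=
  sum_congr rfl fun ω _ => by by_cases hs : s ω <;> simp [hs, h]

lemma partialE_const_mul (c : ℝ) :
    partialE p (fun ω => c * f ω) s = c * partialE p f s := by
  rw [partialE, partialE, mul_sum]
  exact sum_congr rfl fun ω _ => by split_ifs <;> ring

lemma partialE_sub : partialE p (fun ω => f ω - g ω) s = partialE p f s - partialE p g s := by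
  rw [partialE, partialE, partialE, ← sum_sub_distrib]
  exact sum_congr rfl fun ω _ => by split_ifs <;> ring

lemma partialE_one : partialE p (fun _ => 1) s = Pr p s := by
  simp only [partialE, Pr, mul_one]

lemma partialE_eq_add_of_disjoint (hsplit : ∀ ω, s ω ↔ t ω ∨ r ω) (hdisj : ∀ ω, t ω → ¬ r ω) :
    partialE p f s = partialE p f t + partialE p f r := by
  rw [partialE, partialE, partialE, ← sum_add_distrib]
  refine sum_congr rfl fun ω _ => ?_
  by_cases ht : t ω
  · simp [hsplit, ht, hdisj ω ht]
  · simp [hsplit, ht]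

lemma CE_one_sub (h : Pr p s ≠ 0) : CE p (fun ω => 1 - f ω) s = 1 - CE p f s := by
  rw [CE_eq_partialE_div, CE_eq_partialE_div, partialE_sub, partialE_one, sub_div, div_self h]

end PartialExpectation

section InstrumentWeighting

variable {β γ : Type} (p : Ω → ℝ) (Z : Ω → ℝ) (U : Ω → γ) (W : Ω → β) (u : γ) (w : β)

lemma PZ_of_eq {ω : Ω} {z : ℝ} (hw : W ω = w) (hz : Z ω = z) :
    PZ p W Z ω = Pr p (fun ω' => W ω' = w ∧ Z ω' = z) / Pr p (fun ω' => W ω' = w) := by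
  rw [PZ, hw, hz]

lemma partialE_div_PZ {g : Ω → ℝ} {z : ℝ}
    (hq : Pr p (fun ω => W ω = w ∧ Z ω = z) ≠ 0)
    (hP : Pr p (fun ω => U ω = u ∧ W ω = w ∧ Z ω = z) ≠ 0)
    (hCI : Pr p (fun ω => U ω = u ∧ Z ω = z ∧ W ω = w) * Pr p (fun ω => W ω = w)
      = Pr p (fun ω => U ω = u ∧ W ω = w) * Pr p (fun ω => Z ω = z ∧ W ω = w)) :
    partialE p (fun ω => g ω / PZ p W Z ω) (fun ω => U ω = u ∧ W ω = w ∧ Z ω = z)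
      = Pr p (fun ω => U ω = u ∧ W ω = w) * CE p g (fun ω => U ω = u ∧ W ω = w ∧ Z ω = z) := by
  set Q := Pr p (fun ω => W ω = w)
  set q := Pr p (fun ω => W ω = w ∧ Z ω = z)
  set P := Pr p (fun ω => U ω = u ∧ W ω = w ∧ Z ω = z)
  have hCI' : P * Q = Pr p (fun ω => U ω = u ∧ W ω = w) * q := by
    have hP' : Pr p (fun ω => U ω = u ∧ Z ω = z ∧ W ω = w) = P :=
      Pr_congr p fun _ => and_congr_right' and_comm
    have hq' : Pr p (fun ω => Z ω = z ∧ W ω = w) = q := Pr_congr p fun _ => and_comm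
    rwa [hP', hq'] at hCI
  calc partialE p (fun ω => g ω / PZ p W Z ω) (fun ω => U ω = u ∧ W ω = w ∧ Z ω = z)
      = partialE p (fun ω => Q / q * g ω) (fun ω => U ω = u ∧ W ω = w ∧ Z ω = z) :=
        partialE_congr p fun ω ⟨_, hw, hz⟩ => by
          rw [PZ_of_eq p Z W w hw hz, div_div_eq_mul_div, mul_div_assoc, mul_comm]
    _ = Q / q * (CE p g (fun ω => U ω = u ∧ W ω = w ∧ Z ω = z) * P) := by
        rw [partialE_const_mul, partialE_eq_CE_mul p hP]
    _ = Pr p (fun ω => U ω = u ∧ W ω = w) * CE p g (fun ω => U ω = u ∧ W ω = w ∧ Z ω = z) := by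
        field_simp
        linear_combination CE p g (fun ω => U ω = u ∧ W ω = w ∧ Z ω = z) * hCI'

lemma CE_sgn_mul_div_PZ {g : Ω → ℝ} (hZ : ∀ ω, Z ω = 0 ∨ Z ω = 1)
    (hq : ∀ z : ℝ, z = 0 ∨ z = 1 → Pr p (fun ω => W ω = w ∧ Z ω = z) ≠ 0)
    (hPS : Pr p (fun ω => U ω = u ∧ W ω = w) ≠ 0)
    (hP : ∀ z : ℝ, z = 0 ∨ z = 1 → Pr p (fun ω => U ω = u ∧ W ω = w ∧ Z ω = z) ≠ 0)
    (hCI : ∀ z : ℝ, Pr p (fun ω => U ω = u ∧ Z ω = z ∧ W ω = w) * Pr p (fun ω => W ω = w)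
      = Pr p (fun ω => U ω = u ∧ W ω = w) * Pr p (fun ω => Z ω = z ∧ W ω = w)) :
    CE p (fun ω => sgn Z ω * g ω / PZ p W Z ω) (fun ω => U ω = u ∧ W ω = w)
      = CE p g (fun ω => U ω = u ∧ W ω = w ∧ Z ω = 1)
        - CE p g (fun ω => U ω = u ∧ W ω = w ∧ Z ω = 0) := by
  have hone := partialE_div_PZ p Z U W u w (g := g)
    (hq 1 (by norm_num)) (hP 1 (by norm_num)) (hCI 1)
  have hzero := partialE_div_PZ p Z U W u w (g := g)
    (hq 0 (by norm_num)) (hP 0 (by norm_num)) (hCI 0)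
  rw [CE_eq_partialE_div, div_eq_iff hPS,
    partialE_eq_add_of_disjoint p (t := fun ω => U ω = u ∧ W ω = w ∧ Z ω = 1)
      (r := fun ω => U ω = u ∧ W ω = w ∧ Z ω = 0)
      (fun ω => by rcases hZ ω with h | h <;> simp [h])
      (fun ω ⟨_, _, h1⟩ ⟨_, _, h0⟩ => one_ne_zero (h1.symm.trans h0)),
    partialE_congr p (g := fun ω => g ω / PZ p W Z ω)
      (fun ω ⟨_, _, hz⟩ => by rw [sgn, if_pos hz, one_mul]), hone,
    partialE_congr p (g := fun ω => -1 * (g ω / PZ p W Z ω))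
      (fun ω ⟨_, _, hz⟩ => by rw [sgn, if_neg (by rw [hz]; norm_num)]; ring),
    partialE_const_mul, hzero]
  ring

end InstrumentWeighting

end FiniteSampleSpace

theorem stmt3_general {β γ : Type} [Fintype Ω]
    (p : Ω → ℝ)
    (A Z : Ω → ℝ) (U : Ω → γ) (W : Ω → β)
    (hA : ∀ ω, A ω = 0 ∨ A ω = 1) (hZ : ∀ ω, Z ω = 0 ∨ Z ω = 1)
    -- (a) positivity
    (hposWZ : ∀ ω, 0 < p ω → ∀ z : ℝ, z = 0 ∨ z = 1 →
      0 < Pr p (fun ω' => W ω' = W ω ∧ Z ω' = z))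
    (hposUW : ∀ ω, 0 < p ω → 0 < Pr p (fun ω' => U ω' = U ω ∧ W ω' = W ω))
    (hposUWZ : ∀ ω, 0 < p ω → ∀ z : ℝ, z = 0 ∨ z = 1 →
      0 < Pr p (fun ω' => U ω' = U ω ∧ W ω' = W ω ∧ Z ω' = z))
    -- (b) U ⫫ Z | W
    (hUZ : ∀ (u : γ) (z : ℝ) (w : β),
      Pr p (fun ω => U ω = u ∧ Z ω = z ∧ W ω = w) * Pr p (fun ω => W ω = w)
        = Pr p (fun ω => U ω = u ∧ W ω = w) * Pr p (fun ω => Z ω = z ∧ W ω = w))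
    -- (c) independent compliance type
    (δ : β → ℝ)
    (hδ : ∀ ω, 0 < p ω →
      CE p A (fun ω' => U ω' = U ω ∧ W ω' = W ω ∧ Z ω' = 1)
        - CE p A (fun ω' => U ω' = U ω ∧ W ω' = W ω ∧ Z ω' = 0) = δ (W ω)) :
    ∀ ω, 0 < p ω → ∀ a : ℝ, a = 0 ∨ a = 1 →
      CE p (fun ω' => sgn Z ω' * (if A ω' = a then 1 else 0) / PZ p W Z ω')
        (fun ω' => U ω' = U ω ∧ W ω' = W ω)
        = (if a = 1 then (1 : ℝ) else -1) * δ (W ω) := by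
  intro ω hω a ha
  have hP := fun z hz => (hposUWZ ω hω z hz).ne'
  refine (CE_sgn_mul_div_PZ p Z U W (U ω) (W ω) hZ (fun z hz => (hposWZ ω hω z hz).ne')
    (hposUW ω hω).ne' hP (fun z => hUZ (U ω) z (W ω))).trans ?_
  rcases ha with rfl | rfl
  · have hind : (fun ω' => if A ω' = 0 then (1 : ℝ) else 0) = fun ω' => 1 - A ω' :=
      funext fun ω' => by rcases hA ω' with h | h <;> simp [h]
    rw [hind, CE_one_sub p (hP 1 (by norm_num)), CE_one_sub p (hP 0 (by norm_num)), ← hδ ω hω,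
      if_neg zero_ne_one]
    ring
  · have hind : (fun ω' => if A ω' = 1 then (1 : ℝ) else 0) = A :=
      funext fun ω' => by rcases hA ω' with h | h <;> simp [h]
    rw [hind, ← hδ ω hω, if_pos rfl, one_mul]

/-- The weighting identity conditional on the unmeasured confounder U:
E[(−1)^{1−Z} 1{A=a}/P(Z|W) | U, W] = (−1)^{1−a} δ(W) a.s., free of U. -/
theorem stmt3 {β γ : Type} [Fintype Ω]
    (p : Ω → ℝ) (hp0 : ∀ ω, 0 ≤ p ω) (hp1 : ∑ ω, p ω = 1)
    (A Z : Ω → ℝ) (U : Ω → γ) (W : Ω → β)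
    (hA : ∀ ω, A ω = 0 ∨ A ω = 1) (hZ : ∀ ω, Z ω = 0 ∨ Z ω = 1)
    -- (a) positivity
    (hposW : ∀ ω, 0 < p ω → 0 < Pr p (fun ω' => W ω' = W ω))
    (hposWZ : ∀ ω, 0 < p ω → ∀ z : ℝ, z = 0 ∨ z = 1 →
      0 < Pr p (fun ω' => W ω' = W ω ∧ Z ω' = z))
    (hposUW : ∀ ω, 0 < p ω → 0 < Pr p (fun ω' => U ω' = U ω ∧ W ω' = W ω))
    (hposUWZ : ∀ ω, 0 < p ω → ∀ z : ℝ, z = 0 ∨ z = 1 →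
      0 < Pr p (fun ω' => U ω' = U ω ∧ W ω' = W ω ∧ Z ω' = z))
    -- (b) U ⫫ Z | W
    (hUZ : ∀ (u : γ) (z : ℝ) (w : β),
      Pr p (fun ω => U ω = u ∧ Z ω = z ∧ W ω = w) * Pr p (fun ω => W ω = w)
        = Pr p (fun ω => U ω = u ∧ W ω = w) * Pr p (fun ω => Z ω = z ∧ W ω = w))
    -- (c) independent compliance type
    (δ : β → ℝ)
    (hδ : ∀ ω, 0 < p ω →
      CE p A (fun ω' => U ω' = U ω ∧ W ω' = W ω ∧ Z ω' = 1)
        - CE p A (fun ω' => U ω' = U ω ∧ W ω' = W ω ∧ Z ω' = 0) = δ (W ω))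
    (hδne : ∀ ω, 0 < p ω → δ (W ω) ≠ 0) :
    ∀ ω, 0 < p ω → ∀ a : ℝ, a = 0 ∨ a = 1 →
      CE p (fun ω' => sgn Z ω' * (if A ω' = a then 1 else 0) / PZ p W Z ω')
        (fun ω' => U ω' = U ω ∧ W ω' = W ω)
        = (if a = 1 then (1 : ℝ) else -1) * δ (W ω) :=
  stmt3_general p A Z U W hA hZ hposWZ hposUW hposUWZ hUZ δ hδ
end
end

section
/- Let A, Z ∈ {0,1} and W be random variables on a finite probability space with 0 < P(Z=1|W) < 1 a.s. and δ(W) := E[A|W,Z=1] − E[A|W,Z=0] ≠ 0 a.s. Let m*(W,Z) be any function (a possibly misspecified model for E[A|W,Z]) and δ*(W) any function with δ*(W) ≠ 0 a.s., and set ε* = A − δ*(W)Z − m*(W, 0) where m*(W,0) is an arbitrary function of W. Then E[ (−1)^{1−Z} ε* / ( P(Z|W) δ*(W) ) | W ] = (δ(W) − δ*(W)) / δ*(W) almost surely. In particular, this conditional expectation is zero if and only if δ*(W) = δ(W) a.s. -/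
open Finset
open scoped Classical BigOperators

noncomputable section

variable {Ω : Type}

/-!
On the stratum `W = w` the propensity `PZ` takes the two values `P(Z = z | W = w)`, so the
inverse weighting turns the conditional mean of the signed residual into a difference of
stratum means, `(E[A | w, Z = 1] - δ*(w) - m*(w)) / δ*(w) - (E[A | w, Z = 0] - m*(w)) / δ*(w)`.
The working model `m*` cancels, leaving `(δ(w) - δ*(w)) / δ*(w)`.
-/

section FiniteProbability

variable [Fintype Ω] (p : Ω → ℝ)

theorem sum_ite_eq_add_of_binary (s : Ω → Prop) [DecidablePred s] (g Z : Ω → ℝ)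
    (hZ : ∀ ω, Z ω = 0 ∨ Z ω = 1) :
    (∑ ω, if s ω then g ω else 0)
      = (∑ ω, if s ω ∧ Z ω = 1 then g ω else 0)
        + ∑ ω, if s ω ∧ Z ω = 0 then g ω else 0 := by
  rw [← sum_add_distrib]
  refine sum_congr rfl fun ω _ => ?_
  rcases hZ ω with h | h <;> by_cases hs : s ω <;> simp [h, hs]

theorem sum_ite_mul_eq_CE_sub_mul {s : Ω → Prop} [DecidablePred s] {f g : Ω → ℝ} {c k : ℝ}
    (hs : Pr p s ≠ 0) (hg : ∀ ω, s ω → g ω = (f ω - c) * k) :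
    (∑ ω, if s ω then p ω * g ω else 0) = (CE p f s - c) * k * Pr p s := by
  have hCE : CE p f s * Pr p s = ∑ ω, if s ω then p ω * f ω else 0 := by
    rw [CE, div_mul_cancel₀ _ hs]
    congr!
  have hPr : Pr p s = ∑ ω, if s ω then p ω else 0 := by
    rw [Pr]
    congr!
  rw [sub_mul, sub_mul, mul_right_comm, hCE, hPr, mul_sum, sum_mul, ← sum_sub_distrib]
  refine sum_congr rfl fun ω _ => ?_
  by_cases h : s ω
  · simp only [h, if_true, hg ω h]
    ring
  · simp [h]

theorem PZ_eq_div_of_eq {β : Type} {W : Ω → β} {Z : Ω → ℝ} {ω : Ω} {w : β} {z : ℝ}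
    (hW : W ω = w) (hZ : Z ω = z) :
    PZ p W Z ω = Pr p (fun ω' => W ω' = w ∧ Z ω' = z) / Pr p (fun ω' => W ω' = w) := by
  subst hW hZ
  rfl

theorem CE_signedResidual_eq {β : Type} (A Z : Ω → ℝ) (W : Ω → β)
    (hZ : ∀ ω, Z ω = 0 ∨ Z ω = 1) (δs ms : β → ℝ) (w : β) (hδs : δs w ≠ 0)
    (hPW : Pr p (fun ω => W ω = w) ≠ 0)
    (hP1 : Pr p (fun ω => W ω = w ∧ Z ω = 1) ≠ 0)
    (hP0 : Pr p (fun ω => W ω = w ∧ Z ω = 0) ≠ 0) :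
    CE p (fun ω => sgn Z ω * (A ω - δs (W ω) * Z ω - ms (W ω)) / (PZ p W Z ω * δs (W ω)))
        (fun ω => W ω = w)
      = (CE p A (fun ω => W ω = w ∧ Z ω = 1)
          - CE p A (fun ω => W ω = w ∧ Z ω = 0) - δs w) / δs w := by
  rw [CE, sum_ite_eq_add_of_binary _ _ Z hZ,
    sum_ite_mul_eq_CE_sub_mul p hP1 (c := δs w + ms w)
      (k := Pr p (fun ω => W ω = w) / (Pr p (fun ω => W ω = w ∧ Z ω = 1) * δs w)),
    sum_ite_mul_eq_CE_sub_mul p hP0 (c := ms w)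
      (k := -(Pr p (fun ω => W ω = w) / (Pr p (fun ω => W ω = w ∧ Z ω = 0) * δs w)))]
  · field_simp
    ring
  · rintro ω ⟨hW, hz⟩
    rw [PZ_eq_div_of_eq p hW hz, hW, hz, sgn, if_neg (by rw [hz]; norm_num)]
    field_simp
    ring
  · rintro ω ⟨hW, hz⟩
    rw [PZ_eq_div_of_eq p hW hz, hW, hz, sgn, if_pos hz]
    field_simp
    ring

end FiniteProbability

theorem stmt6_general {β : Type} [Fintype Ω]
    (p : Ω → ℝ)
    (A Z : Ω → ℝ) (W : Ω → β)
    (hZ : ∀ ω, Z ω = 0 ∨ Z ω = 1)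
    (hposW : ∀ ω, 0 < p ω → 0 < Pr p (fun ω' => W ω' = W ω))
    (hposWZ : ∀ ω, 0 < p ω → ∀ z : ℝ, z = 0 ∨ z = 1 →
      0 < Pr p (fun ω' => W ω' = W ω ∧ Z ω' = z))
    (δ : β → ℝ)
    (hδdef : ∀ ω, 0 < p ω →
      δ (W ω) = CE p A (fun ω' => W ω' = W ω ∧ Z ω' = 1)
        - CE p A (fun ω' => W ω' = W ω ∧ Z ω' = 0))
    -- possibly misspecified working models
    (δs : β → ℝ) (hδsne : ∀ ω, 0 < p ω → δs (W ω) ≠ 0)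
    (ms : β → ℝ) :
    ∀ ω, 0 < p ω →
      (CE p (fun ω' => sgn Z ω'
            * (A ω' - δs (W ω') * Z ω' - ms (W ω'))
            / (PZ p W Z ω' * δs (W ω')))
          (fun ω' => W ω' = W ω)
        = (δ (W ω) - δs (W ω)) / δs (W ω))
      ∧ (CE p (fun ω' => sgn Z ω'
            * (A ω' - δs (W ω') * Z ω' - ms (W ω'))
            / (PZ p W Z ω' * δs (W ω')))
          (fun ω' => W ω' = W ω) = 0 ↔ δs (W ω) = δ (W ω)) := by
  intro ω hω
  have hmean := CE_signedResidual_eq p A Z W hZ δs ms (W ω) (hδsne ω hω) (hposW ω hω).ne'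
    (hposWZ ω hω 1 (.inr rfl)).ne' (hposWZ ω hω 0 (.inl rfl)).ne'
  rw [← hδdef ω hω] at hmean
  refine ⟨hmean, ?_⟩
  rw [hmean, div_eq_zero_iff, sub_eq_zero, or_iff_left (hδsne ω hω), eq_comm]

/-- With the true instrument propensity but a possibly misspecified treatment model,
the signed weighted residual has conditional mean (δ − δ*)/δ*, vanishing iff δ* = δ. -/
theorem stmt6 {β : Type} [Fintype Ω]
    (p : Ω → ℝ) (hp0 : ∀ ω, 0 ≤ p ω) (hp1 : ∑ ω, p ω = 1)
    (A Z : Ω → ℝ) (W : Ω → β)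
    (hA : ∀ ω, A ω = 0 ∨ A ω = 1) (hZ : ∀ ω, Z ω = 0 ∨ Z ω = 1)
    (hposW : ∀ ω, 0 < p ω → 0 < Pr p (fun ω' => W ω' = W ω))
    (hposWZ : ∀ ω, 0 < p ω → ∀ z : ℝ, z = 0 ∨ z = 1 →
      0 < Pr p (fun ω' => W ω' = W ω ∧ Z ω' = z))
    (δ : β → ℝ)
    (hδdef : ∀ ω, 0 < p ω →
      δ (W ω) = CE p A (fun ω' => W ω' = W ω ∧ Z ω' = 1)
        - CE p A (fun ω' => W ω' = W ω ∧ Z ω' = 0))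
    (hδne : ∀ ω, 0 < p ω → δ (W ω) ≠ 0)
    -- possibly misspecified working models
    (δs : β → ℝ) (hδsne : ∀ ω, 0 < p ω → δs (W ω) ≠ 0)
    (ms : β → ℝ) :
    ∀ ω, 0 < p ω →
      (CE p (fun ω' => sgn Z ω'
            * (A ω' - δs (W ω') * Z ω' - ms (W ω'))
            / (PZ p W Z ω' * δs (W ω')))
          (fun ω' => W ω' = W ω)
        = (δ (W ω) - δs (W ω)) / δs (W ω))
      ∧ (CE p (fun ω' => sgn Z ω'
            * (A ω' - δs (W ω') * Z ω' - ms (W ω'))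
            / (PZ p W Z ω' * δs (W ω')))
          (fun ω' => W ω' = W ω) = 0 ↔ δs (W ω) = δ (W ω)) :=
  stmt6_general p A Z W hZ hposW hposWZ δ hδdef δs hδsne ms
end
end
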